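/- arXiv:cs/0205079 — 9 statements merged into one kernel-verified Lean document; each statement's English description precedes it below -/
import Mathlib

section
/- An operation C : 2^L → 2^L is a C-logics if and only if it satisfies Inclusion and 2-Loop: for all A, B ⊆ L, if A ⊆ C(B) and B ⊆ C(A), then C(A) = C(B). -/
/-!
If `A ⊆ C B` and `B ⊆ C A`, then by Inclusion `A ∪ B ⊆ C A`, so Cumulativity applied to
`A ⊆ A ∪ B` gives `C A = C (A ∪ B)`, and symmetrically `C B = C (A ∪ B)`. Conversely, if
`A ⊆ B ⊆ C A`, then Inclusion gives `A ⊆ C B`, so 2-Loop applies.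
-/

section

variable {α : Type*}

def Cumulative [Preorder α] (C : α → α) : Prop :=
  ∀ a b, a ≤ b → b ≤ C a → C a = C b

def TwoLoop [Preorder α] (C : α → α) : Prop :=
  ∀ a b, a ≤ C b → b ≤ C a → C a = C b

theorem Cumulative.twoLoop [SemilatticeSup α] {C : α → α} (hcum : Cumulative C)
    (hinc : ∀ a, a ≤ C a) : TwoLoop C := by
  intro a b hab hba
  have ha : C a = C (a ⊔ b) := hcum a (a ⊔ b) le_sup_left (sup_le (hinc a) hba)
  have hb : C b = C (a ⊔ b) := by
    rw [sup_comm]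
    exact hcum b (b ⊔ a) le_sup_left (sup_le (hinc b) hab)
  rw [ha, hb]

theorem TwoLoop.cumulative [Preorder α] {C : α → α} (hloop : TwoLoop C)
    (hinc : ∀ a, a ≤ C a) : Cumulative C :=
  fun a b hab hba => hloop a b (hab.trans (hinc b)) hba

end

theorem stmt_1_general {L : Type*} (C : Set L → Set L) :
    ((∀ A : Set L, A ⊆ C A) ∧
      (∀ A B : Set L, A ⊆ B → B ⊆ C A → C A = C B)) ↔
    ((∀ A : Set L, A ⊆ C A) ∧
      (∀ A B : Set L, A ⊆ C B → B ⊆ C A → C A = C B)) :=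
  ⟨fun ⟨hinc, hcum⟩ => ⟨hinc, Cumulative.twoLoop hcum hinc⟩,
    fun ⟨hinc, hloop⟩ => ⟨hinc, TwoLoop.cumulative hloop hinc⟩⟩

/-- An operation `C : 2^L → 2^L` is a C-logics (Inclusion + Cumulativity) iff it satisfies
Inclusion and 2-Loop. -/
theorem stmt_1 {L : Type*} [Nonempty L] (C : Set L → Set L) :
    ((∀ A : Set L, A ⊆ C A) ∧
      (∀ A B : Set L, A ⊆ B → B ⊆ C A → C A = C B)) ↔
    ((∀ A : Set L, A ⊆ C A) ∧
      (∀ A B : Set L, A ⊆ C B → B ⊆ C A → C A = C B)) :=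
  stmt_1_general C
end

section
/- Let C be a C-logics on L. For every A ⊆ L, C(A) = Cn(C(A)) and C(A) = C(Cn(A)). -/
/-- `Cn C A` is the intersection of all theories of `C` that include `A`. -/
def Cn {L : Type*} (C : Set L → Set L) (A : Set L) : Set L :=
  ⋂₀ {T : Set L | A ⊆ T ∧ C T = T}

section

variable {L : Type*} (C : Set L → Set L)

theorem subset_Cn (A : Set L) : A ⊆ Cn C A :=
  fun _ hx _ hT => hT.1 hx

theorem Cn_subset_of_fixed {A T : Set L} (hAT : A ⊆ T) (hT : C T = T) : Cn C A ⊆ T :=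
  Set.sInter_subset_of_mem ⟨hAT, hT⟩

theorem Cn_eq_self_of_fixed {T : Set L} (hT : C T = T) : Cn C T = T :=
  (Cn_subset_of_fixed C subset_rfl hT).antisymm (subset_Cn C T)

theorem idempotent_of_cumulative (hIncl : ∀ A : Set L, A ⊆ C A)
    (hCum : ∀ A B : Set L, A ⊆ B → B ⊆ C A → C A = C B) (A : Set L) : C (C A) = C A :=
  (hCum A (C A) (hIncl A) subset_rfl).symm

end

theorem stmt_6_general {L : Type*} (C : Set L → Set L)
    (hIncl : ∀ A : Set L, A ⊆ C A)
    (hCum : ∀ A B : Set L, A ⊆ B → B ⊆ C A → C A = C B)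
    (A : Set L) :
    C A = Cn C (C A) ∧ C A = C (Cn C A) := by
  have hidem : C (C A) = C A := idempotent_of_cumulative C hIncl hCum A
  exact ⟨(Cn_eq_self_of_fixed C hidem).symm,
    hCum A (Cn C A) (subset_Cn C A) (Cn_subset_of_fixed C (hIncl A) hidem)⟩

/-- For a C-logics, `C(A) = Cn(C(A))` and `C(A) = C(Cn(A))`. -/
theorem stmt_6 {L : Type*} [Nonempty L] (C : Set L → Set L)
    (hIncl : ∀ A : Set L, A ⊆ C A)
    (hCum : ∀ A B : Set L, A ⊆ B → B ⊆ C A → C A = C B)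
    (A : Set L) :
    C A = Cn C (C A) ∧ C A = C (Cn C A) :=
  stmt_6_general C hIncl hCum A
end

section
/- Let ⟨M, ⊨, f⟩ be an fC-model for the language L and define C(A) = Th(f(Mod(A))) for every A ⊆ L. Then C is a C-logics, i.e., C satisfies Inclusion (A ⊆ C(A) for all A ⊆ L) and Cumulativity (for all A, B ⊆ L, A ⊆ B ⊆ C(A) implies C(A) = C(B)). -/
/-- `ModSet sat A` is the set of models satisfying every formula of `A`. -/
def ModSet {M L : Type*} (sat : M → L → Prop) (A : Set L) : Set M :=
  {m | ∀ a ∈ A, sat m a}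

/-- `ThSet sat X` is the set of formulas satisfied by every model of `X`. -/
def ThSet {M L : Type*} (sat : M → L → Prop) (X : Set M) : Set L :=
  {a | ∀ m ∈ X, sat m a}

section ModTh

variable {M L : Type*} (sat : M → L → Prop)

theorem subset_thSet_iff_subset_modSet {A : Set L} {X : Set M} :
    A ⊆ ThSet sat X ↔ X ⊆ ModSet sat A :=
  ⟨fun h _ hm _ ha => h ha _ hm, fun h _ ha _ hm => h hm _ ha⟩

theorem modSet_anti {A B : Set L} (hAB : A ⊆ B) : ModSet sat B ⊆ ModSet sat A :=
  fun _ hm _ ha => hm _ (hAB ha)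

def choiceConsequence (f : Set M → Set M) (A : Set L) : Set L :=
  ThSet sat (f (ModSet sat A))

variable {sat} {f : Set M → Set M}

theorem subset_choiceConsequence (hContr : ∀ X, f X ⊆ X) (A : Set L) :
    A ⊆ choiceConsequence sat f A :=
  (subset_thSet_iff_subset_modSet sat).2 (hContr _)

theorem choiceConsequence_eq_of_subset
    (hLCum : ∀ X Y : Set M, f X ⊆ Y → Y ⊆ X → f Y = f X)
    {A B : Set L} (hAB : A ⊆ B) (hB : B ⊆ choiceConsequence sat f A) :
    choiceConsequence sat f A = choiceConsequence sat f B := by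
  have hfA : f (ModSet sat A) ⊆ ModSet sat B := (subset_thSet_iff_subset_modSet sat).1 hB
  rw [choiceConsequence, choiceConsequence, hLCum _ _ hfA (modSet_anti sat hAB)]

end ModTh

theorem stmt_9_general {L M : Type*} (sat : M → L → Prop) (f : Set M → Set M)
    (hContr : ∀ X : Set M, f X ⊆ X)
    (hLCum : ∀ X Y : Set M, f X ⊆ Y → Y ⊆ X → f Y = f X)
    (C : Set L → Set L)
    (hC : ∀ A : Set L, C A = ThSet sat (f (ModSet sat A))) :
    (∀ A : Set L, A ⊆ C A) ∧
    (∀ A B : Set L, A ⊆ B → B ⊆ C A → C A = C B) := by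
  obtain rfl : C = choiceConsequence sat f := funext hC
  exact ⟨subset_choiceConsequence hContr,
    fun _ _ => choiceConsequence_eq_of_subset hLCum⟩

/-- Soundness: the operation defined by an fC-model is a C-logics. -/
theorem stmt_9 {L M : Type*} [Nonempty L] (sat : M → L → Prop) (f : Set M → Set M)
    (hContr : ∀ X : Set M, f X ⊆ X)
    (hLCum : ∀ X Y : Set M, f X ⊆ Y → Y ⊆ X → f Y = f X)
    (C : Set L → Set L)
    (hC : ∀ A : Set L, C A = ThSet sat (f (ModSet sat A))) :
    (∀ A : Set L, A ⊆ C A) ∧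
    (∀ A B : Set L, A ⊆ B → B ⊆ C A → C A = C B) :=
  stmt_9_general sat f hContr hLCum C hC
end

section
/- If C is a C-logics on L, then there exists a restricted fC-model ⟨M, ⊨, f⟩ such that C(A) = Th(f(Mod(A))) for every A ⊆ L. -/
/-!
The models are the sets of formulas, with `m ⊨ a` iff `a ∈ m`, so that `Mod A` is the set of
supersets of `A` and `Th X = ⋂₀ X`. The choice function picks the single model `C (⋂₀ X)` when it
lies in `X` and otherwise leaves `X` unchanged; on `Mod A` it picks `C A`, whose theory is `C A`.
Local cumulativity of this choice function is exactly cumulativity of `C`.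
-/

namespace CLogic

variable {L : Type*}

lemma modSet_mem (A : Set L) : ModSet (fun m a => a ∈ m) A = Set.Ici A :=
  rfl

lemma thSet_mem (X : Set (Set L)) : ThSet (fun m a => a ∈ m) X = ⋂₀ X := by
  ext a
  simp [ThSet]

open Classical in
noncomputable def canonicalChoice (C : Set L → Set L) (X : Set (Set L)) : Set (Set L) :=
  if C (⋂₀ X) ∈ X then {C (⋂₀ X)} else X

variable (C : Set L → Set L)

lemma canonicalChoice_of_mem {X : Set (Set L)} (h : C (⋂₀ X) ∈ X) :
    canonicalChoice C X = {C (⋂₀ X)} :=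
  if_pos h

lemma canonicalChoice_of_notMem {X : Set (Set L)} (h : C (⋂₀ X) ∉ X) :
    canonicalChoice C X = X :=
  if_neg h

lemma canonicalChoice_subset (X : Set (Set L)) : canonicalChoice C X ⊆ X := by
  by_cases h : C (⋂₀ X) ∈ X
  · rw [canonicalChoice_of_mem C h]
    exact Set.singleton_subset_iff.mpr h
  · rw [canonicalChoice_of_notMem C h]

lemma canonicalChoice_eq_empty {X : Set (Set L)} (hX : canonicalChoice C X = ∅) : X = ∅ := by
  by_cases h : C (⋂₀ X) ∈ X
  · rw [canonicalChoice_of_mem C h] at hX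
    exact absurd hX (Set.singleton_ne_empty _)
  · rwa [canonicalChoice_of_notMem C h] at hX

lemma canonicalChoice_localCumulative
    (hCum : ∀ A B : Set L, A ⊆ B → B ⊆ C A → C A = C B)
    {X Y : Set (Set L)} (hfY : canonicalChoice C X ⊆ Y) (hYX : Y ⊆ X) :
    canonicalChoice C Y = canonicalChoice C X := by
  by_cases h : C (⋂₀ X) ∈ X
  · rw [canonicalChoice_of_mem C h] at hfY ⊢
    have hY : C (⋂₀ X) ∈ Y := Set.singleton_subset_iff.mp hfY
    have hC : C (⋂₀ X) = C (⋂₀ Y) :=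
      hCum _ _ (Set.sInter_subset_sInter hYX) (Set.sInter_subset_of_mem hY)
    rw [canonicalChoice_of_mem C (hC ▸ hY), hC]
  · rw [canonicalChoice_of_notMem C h] at hfY ⊢
    obtain rfl : Y = X := hYX.antisymm hfY
    exact canonicalChoice_of_notMem C h

lemma canonicalChoice_Ici (hIncl : ∀ A : Set L, A ⊆ C A) (A : Set L) :
    canonicalChoice C (Set.Ici A) = {C A} := by
  have hA : ⋂₀ Set.Ici A = A := csInf_Ici
  rw [canonicalChoice_of_mem C (by rw [hA]; exact hIncl A), hA]

end CLogic

open CLogic in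
theorem stmt_10_general {L : Type u} (C : Set L → Set L)
    (hIncl : ∀ A : Set L, A ⊆ C A)
    (hCum : ∀ A B : Set L, A ⊆ B → B ⊆ C A → C A = C B) :
    ∃ (M : Type u) (sat : M → L → Prop) (f : Set M → Set M),
      (∀ X : Set M, f X ⊆ X) ∧
      (∀ X Y : Set M, f X ⊆ Y → Y ⊆ X → f Y = f X) ∧
      (∀ X : Set M, f X = ∅ → X = ∅) ∧
      (∀ A : Set L, C A = ThSet sat (f (ModSet sat A))) :=
  ⟨Set L, fun m a => a ∈ m, canonicalChoice C,
    canonicalChoice_subset C,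
    fun _ _ => canonicalChoice_localCumulative C hCum,
    fun _ => canonicalChoice_eq_empty C,
    fun A => by rw [modSet_mem, canonicalChoice_Ici C hIncl, thSet_mem, Set.sInter_singleton]⟩

/-- Representation: every C-logics is defined by some restricted fC-model. -/
theorem stmt_10 {L : Type u} [Nonempty L] (C : Set L → Set L)
    (hIncl : ∀ A : Set L, A ⊆ C A)
    (hCum : ∀ A B : Set L, A ⊆ B → B ⊆ C A → C A = C B) :
    ∃ (M : Type u) (sat : M → L → Prop) (f : Set M → Set M),
      (∀ X : Set M, f X ⊆ X) ∧
      (∀ X Y : Set M, f X ⊆ Y → Y ⊆ X → f Y = f X) ∧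
      (∀ X : Set M, f X = ∅ → X = ∅) ∧
      (∀ A : Set L, C A = ThSet sat (f (ModSet sat A))) :=
  stmt_10_general C hIncl hCum
end

section
/- Let L be closed under a binary connective ∧ and a unary connective ¬, and let ⟨M, ⊨, f⟩ be a restricted fC-model that behaves classically with respect to ∧ and ¬ (for every m ∈ M: m ⊨ a∧b iff m ⊨ a and m ⊨ b; m ⊨ ¬a iff m ⊭ a). Then the operation C(A) = Th(f(Mod(A))) satisfies ∧-R (C(A ∪ {a∧b}) = C(A ∪ {a, b})), ¬-R1 (C(A ∪ {a, ¬a}) = L), and ¬-R2 (if C(A ∪ {¬a}) = L then a ∈ C(A)). -/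
/-!
Under classical `∧` and `¬` the model sets of the two sides of `∧`-R coincide, and the model
set of `A ∪ {a, ¬a}` is empty, whose selection is empty by Contraction and has theory `L`.
For `¬`-R2, a theory containing both `a` and `¬a` forces `f (Mod (A ∪ {¬a})) = ∅`; Consistency
lifts this to `Mod (A ∪ {¬a}) = ∅`, i.e. every model of `A`, in particular every selected one,
satisfies `a`.
-/

namespace ModSet

variable {M L : Type*} (sat : M → L → Prop)

theorem union (A B : Set L) : ModSet sat (A ∪ B) = ModSet sat A ∩ ModSet sat B := by
  ext m
  simp only [ModSet, Set.mem_ofPred_eq, Set.mem_inter_iff, Set.mem_union, or_imp, forall_and]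

theorem singleton (a : L) : ModSet sat {a} = {m | sat m a} := by
  ext m
  simp [ModSet]

theorem pair (a b : L) : ModSet sat {a, b} = {m | sat m a ∧ sat m b} := by
  ext m
  simp [ModSet]

theorem union_singleton_conj {conj : L → L → L}
    (hconj : ∀ (m : M) (a b : L), sat m (conj a b) ↔ sat m a ∧ sat m b) (A : Set L) (a b : L) :
    ModSet sat (A ∪ {conj a b}) = ModSet sat (A ∪ {a, b}) := by
  simp only [union, singleton, pair, hconj]

theorem union_pair_neg_eq_empty {neg : L → L} (hneg : ∀ (m : M) (a : L), sat m (neg a) ↔ ¬ sat m a)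
    (A : Set L) (a : L) : ModSet sat (A ∪ {a, neg a}) = ∅ := by
  simp only [union, pair, hneg, and_not_self, Set.ofPred_false, Set.inter_empty]

theorem union_singleton_neg {neg : L → L} (hneg : ∀ (m : M) (a : L), sat m (neg a) ↔ ¬ sat m a)
    (A : Set L) (a : L) : ModSet sat (A ∪ {neg a}) = ModSet sat A \ ModSet sat {a} := by
  simp only [union, singleton, hneg, Set.sdiff_eq, Set.compl_ofPred]

end ModSet

namespace ThSet

variable {M L : Type*} (sat : M → L → Prop)

@[simp]
theorem empty : ThSet sat (∅ : Set M) = Set.univ := by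
  ext a
  simp [ThSet]

theorem mem_iff_subset_ModSet_singleton (X : Set M) (a : L) :
    a ∈ ThSet sat X ↔ X ⊆ ModSet sat {a} := by
  rw [ModSet.singleton]
  rfl

theorem eq_empty_of_mem_of_neg_mem {neg : L → L}
    (hneg : ∀ (m : M) (a : L), sat m (neg a) ↔ ¬ sat m a) {X : Set M} {a : L}
    (ha : a ∈ ThSet sat X) (hna : neg a ∈ ThSet sat X) : X = ∅ :=
  Set.eq_empty_of_forall_notMem fun m hm => (hneg m a).1 (hna m hm) (ha m hm)

end ThSet

theorem stmt_11_general {L M : Type*} (conj : L → L → L) (neg : L → L)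
    (sat : M → L → Prop) (f : Set M → Set M)
    (hContr : ∀ X : Set M, f X ⊆ X)
    (hCons : ∀ X : Set M, f X = ∅ → X = ∅)
    (hconj : ∀ (m : M) (a b : L), sat m (conj a b) ↔ sat m a ∧ sat m b)
    (hneg : ∀ (m : M) (a : L), sat m (neg a) ↔ ¬ sat m a)
    (C : Set L → Set L)
    (hC : ∀ A : Set L, C A = ThSet sat (f (ModSet sat A))) :
    (∀ (A : Set L) (a b : L), C (A ∪ {conj a b}) = C (A ∪ {a, b})) ∧
    (∀ (A : Set L) (a : L), C (A ∪ {a, neg a}) = Set.univ) ∧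
    (∀ (A : Set L) (a : L), C (A ∪ {neg a}) = Set.univ → a ∈ C A) := by
  refine ⟨fun A a b => ?_, fun A a => ?_, fun A a h => ?_⟩
  · rw [hC, hC, ModSet.union_singleton_conj sat hconj]
  · rw [hC, ModSet.union_pair_neg_eq_empty sat hneg, Set.subset_empty_iff.1 (hContr ∅),
      ThSet.empty]
  · have hf : f (ModSet sat (A ∪ {neg a})) = ∅ :=
      ThSet.eq_empty_of_mem_of_neg_mem sat hneg (a := a)
        (by rw [← hC, h]; trivial) (by rw [← hC, h]; trivial)
    have hA : ModSet sat A ⊆ ModSet sat {a} := by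
      rw [← Set.sdiff_eq_empty, ← ModSet.union_singleton_neg sat hneg]
      exact hCons _ hf
    rw [hC, ThSet.mem_iff_subset_ModSet_singleton]
    exact (hContr _).trans hA

/-- The operation defined by a restricted fC-model whose satisfaction relation behaves
classically with respect to `∧` and `¬` satisfies `∧`-R, `¬`-R1 and `¬`-R2. -/
theorem stmt_11 {L M : Type*} [Nonempty L] (conj : L → L → L) (neg : L → L)
    (sat : M → L → Prop) (f : Set M → Set M)
    (hContr : ∀ X : Set M, f X ⊆ X)
    (hLCum : ∀ X Y : Set M, f X ⊆ Y → Y ⊆ X → f Y = f X)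
    (hCons : ∀ X : Set M, f X = ∅ → X = ∅)
    (hconj : ∀ (m : M) (a b : L), sat m (conj a b) ↔ sat m a ∧ sat m b)
    (hneg : ∀ (m : M) (a : L), sat m (neg a) ↔ ¬ sat m a)
    (C : Set L → Set L)
    (hC : ∀ A : Set L, C A = ThSet sat (f (ModSet sat A))) :
    (∀ (A : Set L) (a b : L), C (A ∪ {conj a b}) = C (A ∪ {a, b})) ∧
    (∀ (A : Set L) (a : L), C (A ∪ {a, neg a}) = Set.univ) ∧
    (∀ (A : Set L) (a : L), C (A ∪ {neg a}) = Set.univ → a ∈ C A) :=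
  stmt_11_general conj neg sat f hContr hCons hconj hneg C hC
end

section
/- Let L be closed under a unary connective ¬ and let C be a C-logics on L satisfying Weak Compactness, ¬-R1 and ¬-R2. If a ∉ C(A), then there is a maximal consistent set B ⊇ A with a ∉ B. -/
/-!
By ¬-R2, `a ∉ C(A)` makes `A ∪ {¬a}` consistent. Weak Compactness makes the union of a chain
of consistent sets consistent, so Zorn's lemma extends `A ∪ {¬a}` to a maximal consistent set
`B`. Since `¬a ∈ B`, having `a ∈ B` as well would make `B` inconsistent by ¬-R1.
-/

namespace CLogic

variable {L : Type*} {C : Set L → Set L}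

theorem eq_univ_of_subset (hCum : ∀ A B : Set L, A ⊆ B → B ⊆ C A → C A = C B)
    {A B : Set L} (hAB : A ⊆ B) (hA : C A = Set.univ) : C B = Set.univ := by
  rw [← hCum A B hAB (hA ▸ Set.subset_univ B), hA]

theorem sUnion_ne_univ_of_isChain (hCum : ∀ A B : Set L, A ⊆ B → B ⊆ C A → C A = C B)
    (hWC : ∀ A : Set L, C A = Set.univ → ∃ B : Set L, B ⊆ A ∧ B.Finite ∧ C B = Set.univ)
    {c : Set (Set L)} (hchain : IsChain (· ⊆ ·) c) (hne : c.Nonempty)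
    (hcons : ∀ s ∈ c, C s ≠ Set.univ) : C (⋃₀ c) ≠ Set.univ := by
  intro hU
  obtain ⟨F, hFU, hFfin, hF⟩ := hWC _ hU
  obtain ⟨s, hsc, hFs⟩ :=
    hchain.directedOn.exists_mem_subset_of_finite_of_subset_sUnion hne hFfin hFU
  exact hcons s hsc (eq_univ_of_subset hCum hFs hF)

theorem exists_maximal_consistent_superset
    (hCum : ∀ A B : Set L, A ⊆ B → B ⊆ C A → C A = C B)
    (hWC : ∀ A : Set L, C A = Set.univ → ∃ B : Set L, B ⊆ A ∧ B.Finite ∧ C B = Set.univ)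
    {A : Set L} (hA : C A ≠ Set.univ) :
    ∃ M : Set L, A ⊆ M ∧ C M ≠ Set.univ ∧ ∀ B : Set L, M ⊂ B → C B = Set.univ := by
  obtain ⟨M, hAM, hM⟩ := zorn_subset_nonempty {B : Set L | A ⊆ B ∧ C B ≠ Set.univ}
    (fun c hcS hchain hne => by
      obtain ⟨t, ht⟩ := hne
      refine ⟨⋃₀ c, ⟨(hcS ht).1.trans (Set.subset_sUnion_of_mem ht), ?_⟩,
        fun s hs => Set.subset_sUnion_of_mem hs⟩
      exact sUnion_ne_univ_of_isChain hCum hWC hchain ⟨t, ht⟩ fun s hs => (hcS hs).2)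
    A ⟨subset_rfl, hA⟩
  refine ⟨M, hAM, hM.prop.2, fun B hMB => ?_⟩
  by_contra hB
  exact hMB.not_subset (hM.le_of_ge ⟨hAM.trans hMB.subset, hB⟩ hMB.subset)

theorem notMem_of_neg_mem {neg : L → L}
    (hneg1 : ∀ (A : Set L) (a : L), C (A ∪ {a, neg a}) = Set.univ)
    {B : Set L} (hB : C B ≠ Set.univ) {a : L} (hna : neg a ∈ B) : a ∉ B := by
  intro ha
  have hB_eq : B ∪ {a, neg a} = B :=
    Set.union_eq_self_of_subset_right (Set.insert_subset ha (Set.singleton_subset_iff.2 hna))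
  exact hB (hB_eq ▸ hneg1 B a)

end CLogic

theorem stmt_12_general {L : Type*} (neg : L → L) (C : Set L → Set L)
    (hCum : ∀ A B : Set L, A ⊆ B → B ⊆ C A → C A = C B)
    (hWC : ∀ A : Set L, C A = Set.univ → ∃ B : Set L, B ⊆ A ∧ B.Finite ∧ C B = Set.univ)
    (hneg1 : ∀ (A : Set L) (a : L), C (A ∪ {a, neg a}) = Set.univ)
    (hneg2 : ∀ (A : Set L) (a : L), C (A ∪ {neg a}) = Set.univ → a ∈ C A)
    (A : Set L) (a : L) (ha : a ∉ C A) :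
    ∃ B : Set L, A ⊆ B ∧
      (C B ≠ Set.univ ∧ ∀ B' : Set L, B ⊂ B' → C B' = Set.univ) ∧
      a ∉ B := by
  have hcons : C (A ∪ {neg a}) ≠ Set.univ := fun h => ha (hneg2 A a h)
  obtain ⟨M, hAM, hMcons, hMmax⟩ := CLogic.exists_maximal_consistent_superset hCum hWC hcons
  have hna : neg a ∈ M := hAM (Or.inr rfl)
  exact ⟨M, Set.subset_union_left.trans hAM, ⟨hMcons, hMmax⟩,
    CLogic.notMem_of_neg_mem hneg1 hMcons hna⟩

/-- For a C-logics with Weak Compactness, ¬-R1 and ¬-R2: if `a ∉ C(A)`, there is a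
maximal consistent set `B ⊇ A` with `a ∉ B`. -/
theorem stmt_12 {L : Type*} [Nonempty L] (neg : L → L) (C : Set L → Set L)
    (hIncl : ∀ A : Set L, A ⊆ C A)
    (hCum : ∀ A B : Set L, A ⊆ B → B ⊆ C A → C A = C B)
    (hWC : ∀ A : Set L, C A = Set.univ → ∃ B : Set L, B ⊆ A ∧ B.Finite ∧ C B = Set.univ)
    (hneg1 : ∀ (A : Set L) (a : L), C (A ∪ {a, neg a}) = Set.univ)
    (hneg2 : ∀ (A : Set L) (a : L), C (A ∪ {neg a}) = Set.univ → a ∈ C A)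
    (A : Set L) (a : L) (ha : a ∉ C A) :
    ∃ B : Set L, A ⊆ B ∧
      (C B ≠ Set.univ ∧ ∀ B' : Set L, B ⊂ B' → C B' = Set.univ) ∧
      a ∉ B :=
  stmt_12_general neg C hCum hWC hneg1 hneg2 A a ha
end

section
/- Let L be closed under a unary connective ¬ and let C be a C-logics on L satisfying Weak Compactness, ¬-R1 and ¬-R2. Then for every A ⊆ L, Cn(A) equals the intersection of all maximal consistent sets B with A ⊆ B. -/
open Set

section ConsequenceOperator

variable {L : Type*} {C : Set L → Set L}

def IsMaxConsistent (C : Set L → Set L) (B : Set L) : Prop :=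
  C B ≠ univ ∧ ∀ B' : Set L, B ⊂ B' → C B' = univ

theorem inconsistent_mono (hCum : ∀ A B : Set L, A ⊆ B → B ⊆ C A → C A = C B)
    {A B : Set L} (hAB : A ⊆ B) (hA : C A = univ) : C B = univ :=
  (hCum A B hAB (hA ▸ subset_univ B)).symm.trans hA

theorem exists_isMaxConsistent_superset
    (hCum : ∀ A B : Set L, A ⊆ B → B ⊆ C A → C A = C B)
    (hWC : ∀ A : Set L, C A = univ → ∃ B : Set L, B ⊆ A ∧ B.Finite ∧ C B = univ)
    {S : Set L} (hS : C S ≠ univ) : ∃ M, S ⊆ M ∧ IsMaxConsistent C M := by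
  have hchain : ∀ c ⊆ {B | C B ≠ univ}, IsChain (· ⊆ ·) c → c.Nonempty →
      ∃ ub ∈ {B | C B ≠ univ}, ∀ s ∈ c, s ⊆ ub := by
    refine fun c hc hchain hne => ⟨⋃₀ c, fun hcon => ?_, fun s hs => subset_sUnion_of_mem hs⟩
    obtain ⟨F, hFc, hFfin, hF⟩ := hWC _ hcon
    obtain ⟨t, htc, hFt⟩ :=
      hchain.directedOn.exists_mem_subset_of_finite_of_subset_sUnion hne hFfin hFc
    exact hc htc (inconsistent_mono hCum hFt hF)
  obtain ⟨M, hSM, hM⟩ := zorn_subset_nonempty _ hchain S hS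
  refine ⟨M, hSM, hM.prop, fun B' hMB' => ?_⟩
  by_contra hB'
  exact hMB'.not_subset (hM.le_of_ge hB' hMB'.subset)

theorem IsMaxConsistent.closure_eq (hIncl : ∀ A : Set L, A ⊆ C A)
    (hCum : ∀ A B : Set L, A ⊆ B → B ⊆ C A → C A = C B)
    {B : Set L} (hB : IsMaxConsistent C B) : C B = B := by
  refine (subset_antisymm (fun b hb => ?_) (hIncl B))
  by_contra hbB
  exact hB.1 ((hCum B (insert b B) (subset_insert b B) (insert_subset hb (hIncl B))).trans
    (hB.2 _ (ssubset_insert hbB)))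

theorem neg_notMem_of_consistent (neg : L → L)
    (hneg1 : ∀ (A : Set L) (a : L), C (A ∪ {a, neg a}) = univ)
    {M : Set L} (hM : C M ≠ univ) {x : L} (hx : x ∈ M) : neg x ∉ M := by
  intro hnx
  have hM_eq : M ∪ {x, neg x} = M := union_eq_self_of_subset_right (pair_subset hx hnx)
  exact hM (hM_eq ▸ hneg1 M x)

theorem mem_of_forall_isMaxConsistent (neg : L → L)
    (hCum : ∀ A B : Set L, A ⊆ B → B ⊆ C A → C A = C B)
    (hWC : ∀ A : Set L, C A = univ → ∃ B : Set L, B ⊆ A ∧ B.Finite ∧ C B = univ)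
    (hneg1 : ∀ (A : Set L) (a : L), C (A ∪ {a, neg a}) = univ)
    (hneg2 : ∀ (A : Set L) (a : L), C (A ∪ {neg a}) = univ → a ∈ C A)
    {T : Set L} (hT : C T = T) {x : L}
    (hx : ∀ M, T ⊆ M → IsMaxConsistent C M → x ∈ M) : x ∈ T := by
  by_contra hxT
  have hcon : C (T ∪ {neg x}) ≠ univ := fun h => hxT (hT ▸ hneg2 T x h)
  obtain ⟨M, hTM, hM⟩ := exists_isMaxConsistent_superset hCum hWC hcon
  exact neg_notMem_of_consistent neg hneg1 hM.1 (hx M (subset_union_left.trans hTM) hM)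
    (hTM (mem_union_right T rfl))

end ConsequenceOperator

theorem stmt_14_general {L : Type*} (neg : L → L) (C : Set L → Set L)
    (hIncl : ∀ A : Set L, A ⊆ C A)
    (hCum : ∀ A B : Set L, A ⊆ B → B ⊆ C A → C A = C B)
    (hWC : ∀ A : Set L, C A = Set.univ → ∃ B : Set L, B ⊆ A ∧ B.Finite ∧ C B = Set.univ)
    (hneg1 : ∀ (A : Set L) (a : L), C (A ∪ {a, neg a}) = Set.univ)
    (hneg2 : ∀ (A : Set L) (a : L), C (A ∪ {neg a}) = Set.univ → a ∈ C A)
    (A : Set L) :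
    Cn C A =
      ⋂₀ {B : Set L | A ⊆ B ∧ C B ≠ Set.univ ∧ ∀ B' : Set L, B ⊂ B' → C B' = Set.univ} := by
  apply subset_antisymm
  · rintro x hx B ⟨hAB, hB⟩
    exact hx B ⟨hAB, IsMaxConsistent.closure_eq hIncl hCum hB⟩
  · rintro x hx T ⟨hAT, hT⟩
    exact mem_of_forall_isMaxConsistent neg hCum hWC hneg1 hneg2 hT
      fun M hTM hM => hx M ⟨hAT.trans hTM, hM⟩

/-- For a C-logics with Weak Compactness, ¬-R1 and ¬-R2, `Cn(A)` is the intersection of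
all maximal consistent sets including `A`. -/
theorem stmt_14 {L : Type*} [Nonempty L] (neg : L → L) (C : Set L → Set L)
    (hIncl : ∀ A : Set L, A ⊆ C A)
    (hCum : ∀ A B : Set L, A ⊆ B → B ⊆ C A → C A = C B)
    (hWC : ∀ A : Set L, C A = Set.univ → ∃ B : Set L, B ⊆ A ∧ B.Finite ∧ C B = Set.univ)
    (hneg1 : ∀ (A : Set L) (a : L), C (A ∪ {a, neg a}) = Set.univ)
    (hneg2 : ∀ (A : Set L) (a : L), C (A ∪ {neg a}) = Set.univ → a ∈ C A)
    (A : Set L) :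
    Cn C A =
      ⋂₀ {B : Set L | A ⊆ B ∧ C B ≠ Set.univ ∧ ∀ B' : Set L, B ⊂ B' → C B' = Set.univ} :=
  stmt_14_general neg C hIncl hCum hWC hneg1 hneg2 A
end

section
/- Let H be a complex Hilbert space, h ∈ H, and L a nonempty set of closed (linear) subspaces of H. For A ⊆ L, with A* the intersection of all members of A and A*_p the orthogonal projection onto A*, define C(A) = {b ∈ L | A*_p(h) ∈ b}. If B ⊆ C(A), then A*_p(h) = (A* ∩ B*)_p(h) and dist(h, A*) ≥ dist(h, B*). -/
/-- The orthogonal projection onto a closed subspace `K` of a complex Hilbert space,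
as a map `H → H`: `projPt K hK x` is the point of `K` closest to `x`. -/
noncomputable def projPt {H : Type*} [NormedAddCommGroup H] [InnerProductSpace ℂ H]
    [CompleteSpace H] (K : Submodule ℂ H) (hK : IsClosed (K : Set H)) (x : H) : H :=
  haveI : CompleteSpace K := hK.completeSpace_coe
  (K.orthogonalProjectionOnto x : H)

/-- `Astar Lset A` is `A*`: the intersection of all the subspaces belonging to
`A ⊆ Lset` (equal to `H` when `A = ∅`). -/
noncomputable def Astar {H : Type*} [NormedAddCommGroup H] [InnerProductSpace ℂ H]
    [CompleteSpace H] (Lset : Set (Submodule ℂ H)) (A : Set ↥Lset) : Submodule ℂ H :=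
  sInf ((fun k : ↥Lset => (k : Submodule ℂ H)) '' A)

/-- `A*` is a closed subspace. -/
lemma isClosed_Astar {H : Type*} [NormedAddCommGroup H] [InnerProductSpace ℂ H]
    [CompleteSpace H] {Lset : Set (Submodule ℂ H)}
    (hL : ∀ K ∈ Lset, IsClosed (K : Set H)) (A : Set ↥Lset) :
    IsClosed ((Astar Lset A : Submodule ℂ H) : Set H) := by
  rw [Astar, Submodule.coe_sInf]
  refine isClosed_biInter ?_
  rintro K ⟨k, hk, rfl⟩
  exact hL k k.2

/-- The intersection of two closed subspaces is closed. -/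
lemma isClosed_inf {H : Type*} [NormedAddCommGroup H] [InnerProductSpace ℂ H]
    [CompleteSpace H] {K K' : Submodule ℂ H}
    (h : IsClosed (K : Set H)) (h' : IsClosed (K' : Set H)) :
    IsClosed ((K ⊓ K' : Submodule ℂ H) : Set H) := by
  rw [Submodule.coe_inf]
  exact h.inter h'

/-- The quantum consequence operation of Engesser and Gabbay determined by the state
`h`: `b ∈ C(A)` iff the projection of `h` on `A*` belongs to `b`. -/
noncomputable def qC {H : Type*} [NormedAddCommGroup H] [InnerProductSpace ℂ H]
    [CompleteSpace H] (Lset : Set (Submodule ℂ H))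
    (hL : ∀ K ∈ Lset, IsClosed (K : Set H)) (h : H) (A : Set ↥Lset) : Set ↥Lset :=
  {b | projPt (Astar Lset A) (isClosed_Astar hL A) h ∈ (b : Submodule ℂ H)}

/-! `B ⊆ C(A)` says exactly that `p := A*_p(h)` lies in `B*`. Then `p` lies in `A* ∩ B* ⊆ A*`
and `h - p` is orthogonal to `A*`, hence to `A* ∩ B*`, so `p` is also the projection onto
`A* ∩ B*`. Finally `dist(h, A*) = ‖h - p‖ ≥ dist(h, B*)` because `p ∈ B*`. -/

theorem Submodule.starProjection_eq_of_le_of_mem {𝕜 E : Type*} [RCLike 𝕜]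
    [NormedAddCommGroup E] [InnerProductSpace 𝕜 E] {U V : Submodule 𝕜 E}
    [U.HasOrthogonalProjection] [V.HasOrthogonalProjection] (hUV : U ≤ V) {x : E}
    (hx : V.starProjection x ∈ U) :
    U.starProjection x = V.starProjection x :=
  U.eq_starProjection_of_mem_orthogonal hx
    (Submodule.orthogonal_le hUV (V.sub_starProjection_mem_orthogonal x))

theorem Submodule.infDist_eq_dist_starProjection {𝕜 E : Type*} [RCLike 𝕜]
    [NormedAddCommGroup E] [InnerProductSpace 𝕜 E] (K : Submodule 𝕜 E)
    [K.HasOrthogonalProjection] (x : E) :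
    Metric.infDist x (K : Set E) = dist x (K.starProjection x) := by
  rw [Metric.infDist_eq_iInf, dist_eq_norm, K.starProjection_minimal]
  simp only [dist_eq_norm]
  rfl

theorem projPt_eq_starProjection {H : Type*} [NormedAddCommGroup H] [InnerProductSpace ℂ H]
    [CompleteSpace H] (K : Submodule ℂ H) (hK : IsClosed (K : Set H))
    [K.HasOrthogonalProjection] (x : H) :
    projPt K hK x = K.starProjection x :=
  rfl

theorem mem_Astar_iff {H : Type*} [NormedAddCommGroup H] [InnerProductSpace ℂ H]
    [CompleteSpace H] {Lset : Set (Submodule ℂ H)} {A : Set ↥Lset} {x : H} :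
    x ∈ Astar Lset A ↔ ∀ a ∈ A, x ∈ (a : Submodule ℂ H) := by
  simp only [Astar, Submodule.mem_sInf, Set.mem_image, forall_exists_index, and_imp,
    forall_apply_eq_imp_iff₂]

theorem subset_qC_iff {H : Type*} [NormedAddCommGroup H] [InnerProductSpace ℂ H]
    [CompleteSpace H] {Lset : Set (Submodule ℂ H)} (hL : ∀ K ∈ Lset, IsClosed (K : Set H))
    (h : H) (A B : Set ↥Lset) :
    B ⊆ qC Lset hL h A ↔ projPt (Astar Lset A) (isClosed_Astar hL A) h ∈ Astar Lset B :=
  mem_Astar_iff.symm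

theorem stmt_18_general {H : Type*} [NormedAddCommGroup H] [InnerProductSpace ℂ H]
    [CompleteSpace H] (h : H) (Lset : Set (Submodule ℂ H))
    (hL : ∀ K ∈ Lset, IsClosed (K : Set H))
    (A B : Set ↥Lset) (hB : B ⊆ qC Lset hL h A) :
    projPt (Astar Lset A) (isClosed_Astar hL A) h =
      projPt (Astar Lset A ⊓ Astar Lset B)
        (isClosed_inf (isClosed_Astar hL A) (isClosed_Astar hL B)) h ∧
    Metric.infDist h ((Astar Lset A : Submodule ℂ H) : Set H) ≥
      Metric.infDist h ((Astar Lset B : Submodule ℂ H) : Set H) := by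
  have : CompleteSpace (Astar Lset A) := (isClosed_Astar hL A).completeSpace_coe
  have : CompleteSpace (Astar Lset A ⊓ Astar Lset B : Submodule ℂ H) :=
    (isClosed_inf (isClosed_Astar hL A) (isClosed_Astar hL B)).completeSpace_coe
  have hPB := (subset_qC_iff hL h A B).mp hB
  simp only [projPt_eq_starProjection] at hPB ⊢
  refine ⟨(Submodule.starProjection_eq_of_le_of_mem inf_le_left
    ⟨(Astar Lset A).starProjection_apply_mem h, hPB⟩).symm, ?_⟩
  rw [ge_iff_le, (Astar Lset A).infDist_eq_dist_starProjection]
  exact Metric.infDist_le_dist_of_mem hPB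

/-- If `B ⊆ C(A)`, then `A*_p(h) = (A* ∩ B*)_p(h)` and `dist(h, A*) ≥ dist(h, B*)`. -/
theorem stmt_18 {H : Type*} [NormedAddCommGroup H] [InnerProductSpace ℂ H]
    [CompleteSpace H] (h : H) (Lset : Set (Submodule ℂ H)) (hLne : Lset.Nonempty)
    (hL : ∀ K ∈ Lset, IsClosed (K : Set H))
    (A B : Set ↥Lset) (hB : B ⊆ qC Lset hL h A) :
    projPt (Astar Lset A) (isClosed_Astar hL A) h =
      projPt (Astar Lset A ⊓ Astar Lset B)
        (isClosed_inf (isClosed_Astar hL A) (isClosed_Astar hL B)) h ∧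
    Metric.infDist h ((Astar Lset A : Submodule ℂ H) : Set H) ≥
      Metric.infDist h ((Astar Lset B : Submodule ℂ H) : Set H) :=
  stmt_18_general h Lset hL A B hB
end

section
/- Let H be a complex Hilbert space, h ∈ H, and L a nonempty set of closed (linear) subspaces of H. Then the quantum consequence operation C defined by b ∈ C(A) iff A*_p(h) ∈ b is an L-logics: it satisfies Inclusion (A ⊆ C(A) for all A ⊆ L) and Loop (for every n ≥ 1 and every family A_0, …, A_{n-1} of subsets of L with A_i ⊆ C(A_{i+1 mod n}) for all i, all the sets C(A_0), …, C(A_{n-1}) are equal). -/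
/-!
Write `p(A)` for the projection of `h` onto `A*`. Inclusion is just `p(A) ∈ A*`. If
`A ⊆ C(B)` then `p(B) ∈ A*`, so `p(A)`, the point of `A*` closest to `h`, is at least as close
to `h` as `p(B)`. Around a loop these distances must therefore all agree, and uniqueness of the
closest point forces `p(A_{i+1}) = p(A_i)`. Since `C(A)` depends only on `p(A)`, Loop follows.
-/

theorem rel_of_forall_rel_succ_mod {α : Type*} (r : α → α → Prop) [Std.Refl r] [IsTrans α r]
    {n : ℕ} {f : ℕ → α} (hf : ∀ i < n, r (f i) (f ((i + 1) % n)))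
    {i j : ℕ} (hi : i < n) (hj : j < n) : r (f i) (f j) := by
  have hreach : ∀ k, r (f i) (f ((i + k) % n)) := by
    intro k
    induction k with
    | zero => simpa [Nat.mod_eq_of_lt hi] using refl_of r (f i)
    | succ k ih =>
      have hstep := hf ((i + k) % n) (Nat.mod_lt _ (by omega))
      rw [Nat.mod_add_mod, add_assoc] at hstep
      exact trans_of r ih hstep
  simpa [show i + (j + n - i) = j + n by omega, Nat.mod_eq_of_lt hj] using hreach (j + n - i)

namespace Submodule

variable {𝕜 E : Type*} [RCLike 𝕜] [NormedAddCommGroup E] [InnerProductSpace 𝕜 E]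
  (K : Submodule 𝕜 E) [K.HasOrthogonalProjection] {x w : E}

theorem norm_sub_sq_eq_norm_sub_starProjection_sq_add (hw : w ∈ K) :
    ‖x - w‖ ^ 2 = ‖x - K.starProjection x‖ ^ 2 + ‖K.starProjection x - w‖ ^ 2 := by
  have horth : inner 𝕜 (x - K.starProjection x) (K.starProjection x - w) = 0 :=
    K.starProjection_inner_eq_zero x _ (K.sub_mem (K.starProjection_apply_mem x) hw)
  rw [← sub_add_sub_cancel x (K.starProjection x) w]
  simp only [sq]
  exact norm_add_sq_eq_norm_sq_add_norm_sq_of_inner_eq_zero _ _ horth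

theorem norm_sub_starProjection_le (hw : w ∈ K) : ‖x - K.starProjection x‖ ≤ ‖x - w‖ := by
  have := K.norm_sub_sq_eq_norm_sub_starProjection_sq_add (x := x) hw
  nlinarith [norm_nonneg (x - w), norm_nonneg (x - K.starProjection x),
    sq_nonneg ‖K.starProjection x - w‖]

theorem eq_starProjection_of_norm_sub_le (hw : w ∈ K)
    (hle : ‖x - w‖ ≤ ‖x - K.starProjection x‖) : w = K.starProjection x := by
  have := K.norm_sub_sq_eq_norm_sub_starProjection_sq_add (x := x) hw
  have hzero : ‖K.starProjection x - w‖ = 0 := by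
    nlinarith [norm_nonneg (x - w), norm_nonneg (K.starProjection x - w)]
  exact (norm_sub_eq_zero_iff.mp hzero).symm

end Submodule

section QuantumConsequence

variable {H : Type*} [NormedAddCommGroup H] [InnerProductSpace ℂ H] [CompleteSpace H]
  {Lset : Set (Submodule ℂ H)} (hL : ∀ K ∈ Lset, IsClosed (K : Set H)) (h : H)

theorem mem_Astar {A : Set ↥Lset} {x : H} :
    x ∈ Astar Lset A ↔ ∀ b ∈ A, x ∈ (b : Submodule ℂ H) := by
  simp [Astar, Submodule.mem_sInf]

/-- `A*_p(h)` in the notation of the paper. -/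
noncomputable abbrev qProj (A : Set ↥Lset) : H :=
  projPt (Astar Lset A) (isClosed_Astar hL A) h

theorem qProj_mem_Astar (A : Set ↥Lset) : qProj hL h A ∈ Astar Lset A := by
  have := (isClosed_Astar hL A).completeSpace_coe
  exact (Astar Lset A).starProjection_apply_mem h

theorem subset_qC (A : Set ↥Lset) : A ⊆ qC Lset hL h A :=
  fun _ hb => mem_Astar.mp (qProj_mem_Astar hL h A) _ hb

variable {hL h} {A B : Set ↥Lset}

theorem qProj_mem_Astar_of_subset_qC (hAB : A ⊆ qC Lset hL h B) :
    qProj hL h B ∈ Astar Lset A :=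
  mem_Astar.mpr fun _ hb => hAB hb

theorem norm_sub_qProj_le_of_subset_qC (hAB : A ⊆ qC Lset hL h B) :
    ‖h - qProj hL h A‖ ≤ ‖h - qProj hL h B‖ := by
  have := (isClosed_Astar hL A).completeSpace_coe
  exact (Astar Lset A).norm_sub_starProjection_le (qProj_mem_Astar_of_subset_qC hAB)

theorem qProj_eq_of_subset_qC (hAB : A ⊆ qC Lset hL h B)
    (hle : ‖h - qProj hL h B‖ ≤ ‖h - qProj hL h A‖) : qProj hL h B = qProj hL h A := by
  have := (isClosed_Astar hL A).completeSpace_coe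
  exact (Astar Lset A).eq_starProjection_of_norm_sub_le (qProj_mem_Astar_of_subset_qC hAB) hle

theorem qC_eq_of_qProj_eq (hAB : qProj hL h A = qProj hL h B) :
    qC Lset hL h A = qC Lset hL h B := by
  ext b
  exact iff_of_eq (congrArg (· ∈ (b : Submodule ℂ H)) hAB)

end QuantumConsequence

theorem stmt_19_general {H : Type*} [NormedAddCommGroup H] [InnerProductSpace ℂ H]
    [CompleteSpace H] (h : H) (Lset : Set (Submodule ℂ H))
    (hL : ∀ K ∈ Lset, IsClosed (K : Set H)) :
    (∀ A : Set ↥Lset, A ⊆ qC Lset hL h A) ∧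
    (∀ n : ℕ, 1 ≤ n → ∀ A : ℕ → Set ↥Lset,
      (∀ i < n, A i ⊆ qC Lset hL h (A ((i + 1) % n))) →
      ∀ i < n, ∀ j < n, qC Lset hL h (A i) = qC Lset hL h (A j)) := by
  refine ⟨subset_qC hL h, fun n _ A hA i hi j hj => ?_⟩
  have hdist : ∀ i < n, ∀ j < n, ‖h - qProj hL h (A i)‖ ≤ ‖h - qProj hL h (A j)‖ :=
    fun i hi j hj => rel_of_forall_rel_succ_mod (· ≤ ·)
      (fun k hk => norm_sub_qProj_le_of_subset_qC (hA k hk)) hi hj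
  have hproj : qProj hL h (A i) = qProj hL h (A j) :=
    rel_of_forall_rel_succ_mod Eq (fun k hk => (qProj_eq_of_subset_qC (hA k hk)
      (hdist _ (Nat.mod_lt _ (by omega)) k hk)).symm) hi hj
  exact qC_eq_of_qProj_eq hproj

/-- The quantum consequence operation is an L-logics: it satisfies Inclusion and Loop. -/
theorem stmt_19 {H : Type*} [NormedAddCommGroup H] [InnerProductSpace ℂ H]
    [CompleteSpace H] (h : H) (Lset : Set (Submodule ℂ H)) (hLne : Lset.Nonempty)
    (hL : ∀ K ∈ Lset, IsClosed (K : Set H)) :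
    (∀ A : Set ↥Lset, A ⊆ qC Lset hL h A) ∧
    (∀ n : ℕ, 1 ≤ n → ∀ A : ℕ → Set ↥Lset,
      (∀ i < n, A i ⊆ qC Lset hL h (A ((i + 1) % n))) →
      ∀ i < n, ∀ j < n, qC Lset hL h (A i) = qC Lset hL h (A j)) :=
  stmt_19_general h Lset hL
end
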